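/- arXiv:1704.06152 — 3 statements merged into one kernel-verified Lean document; each statement's English description precedes it below -/
import Mathlib

section
/- Let A be a pseudocompact k-algebra such that A/J²(A) is finite dimensional over k. Then: (1) for every finitely generated pseudocompact A-module U, the submodule J(A)·U is closed in U; and (2) for every natural number n, the ideal Jⁿ(A) is a closed, finitely generated submodule of A. -/
/-! Throughout, `k` is a perfect field regarded as a discrete topological ring.

A *pseudocompact* `k`-algebra is an associative unital Hausdorff topological `k`-algebra
which has a basis of neighbourhoods of `0` consisting of open two-sided ideals of finite
codimension intersecting in `0`, and which is the inverse limit of its quotients by these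
ideals; equivalently (as encoded below) it is a complete Hausdorff topological algebra with
such a basis of open ideals. -/

/-- The Jacobson radical of a topological algebra: the intersection of the open maximal
left ideals. -/
def openJacobson (A : Type) [Ring A] [TopologicalSpace A] : Ideal A :=
  sInf {I : Ideal A | IsOpen (I : Set A) ∧ I.IsMaximal}

/-- The Jacobson radical `J(A)`, viewed as a `k`-submodule of `A`. -/
def Jrad (k : Type) [Field k] (A : Type) [Ring A] [Algebra k A] [TopologicalSpace A] :
    Submodule k A := (openJacobson A).restrictScalars k

/-- Powers of the radical: `J⁰(A) = A`, `J¹(A) = J(A)`, `Jⁿ(A) = J(A)·Jⁿ⁻¹(A)` for `n > 1`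
(the product of two `k`-submodules being spanned by the products of their elements). -/
def Jpow (k : Type) [Field k] (A : Type) [Ring A] [Algebra k A] [TopologicalSpace A] :
    ℕ → Submodule k A
  | 0 => ⊤
  | 1 => Jrad k A
  | n + 2 => Jrad k A * Jpow k A (n + 1)

/-- `A` is a pseudocompact `k`-algebra: Hausdorff, complete, with a basis of neighbourhoods
of `0` consisting of open two-sided ideals of finite codimension over `k`.  (Hausdorffness is
equivalent to the requirement that these open ideals intersect in `0`, and completeness to
`A` being the inverse limit of its quotients by them.) -/
structure IsPseudocompactAlgebra (k : Type) [Field k] (A : Type) [Ring A] [Algebra k A]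
    [UniformSpace A] [IsUniformAddGroup A] [IsTopologicalRing A] : Prop where
  t2 : T2Space A
  complete : CompleteSpace A
  basis : ∀ s ∈ nhds (0 : A), ∃ I : Ideal A,
    (∀ x ∈ I, ∀ b : A, x * b ∈ I) ∧ IsOpen (I : Set A) ∧
    FiniteDimensional k (A ⧸ I.restrictScalars k) ∧ (I : Set A) ⊆ s

/-- `V` is a pseudocompact `A`-module: Hausdorff, complete, with a basis of neighbourhoods
of `0` consisting of open submodules of finite codimension over `k`. -/
structure IsPseudocompactModule (k : Type) [Field k] (A : Type) [Ring A] [Algebra k A]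
    (V : Type) [AddCommGroup V] [Module k V] [Module A V] [IsScalarTower k A V]
    [UniformSpace V] [IsUniformAddGroup V] : Prop where
  t2 : T2Space V
  complete : CompleteSpace V
  basis : ∀ s ∈ nhds (0 : V), ∃ p : Submodule A V,
    IsOpen (p : Set V) ∧ FiniteDimensional k (V ⧸ p.restrictScalars k) ∧ (p : Set V) ⊆ s

/-- A pseudocompact algebra `A` is *pointed* if `A/J(A)` is isomorphic to a finite product of
copies of `k`; equivalently, there is a surjective `k`-algebra homomorphism `A → kⁿ`
whose kernel is `J(A)`. -/
def IsPointed (k : Type) [Field k] (A : Type) [Ring A] [Algebra k A] [TopologicalSpace A] :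
    Prop :=
  ∃ (n : ℕ) (φ : A →ₐ[k] (Fin n → k)), Function.Surjective φ ∧ RingHom.ker φ = openJacobson A

/-! Pseudocompact modules are linearly compact: a filter with a basis of closed affine subspaces
has a cluster point, because a Zorn-minimal such filter contains a coset of every open subspace
of finite codimension and is therefore Cauchy. Hence continuous linear images of `Aⁿ` are closed,
i.e. finitely generated submodules of pseudocompact modules are closed.

As `A/J²` is finite dimensional, `J ≤ W ⊔ J²` for a finitely generated left ideal `W ≤ J`. If `V`
is an open two-sided ideal of finite codimension, the annihilator of every element of the
finite-dimensional module `A/(W ⊔ V)` contains `V`, hence is open, so `J` kills the simple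
quotients of that module and Nakayama's lemma gives `J ≤ W ⊔ V`; thus `J ≤ closure W = W`.
So `J` is finitely generated, and being two-sided, so are `J • U` and `Jⁿ`, which are therefore
closed. -/

open Filter Topology Set

def HasOpenFiniteCodimBasis (k M : Type*) [Field k] [AddCommGroup M] [Module k M]
    [TopologicalSpace M] : Prop :=
  ∀ s ∈ 𝓝 (0 : M), ∃ p : Submodule k M,
    IsOpen (p : Set M) ∧ FiniteDimensional k (M ⧸ p) ∧ (p : Set M) ⊆ s

def Filter.HasClosedAffineBasis (k : Type*) {M : Type*} [Field k] [AddCommGroup M]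
    [Module k M] [TopologicalSpace M] (F : Filter M) : Prop :=
  ∀ t ∈ F, ∃ s : AffineSubspace k M, IsClosed (s : Set M) ∧ (s : Set M) ∈ F ∧ (s : Set M) ⊆ t

section LinearCompactness

variable {k M : Type*} [Field k] [AddCommGroup M] [Module k M]

theorem AffineSubspace.coe_mk'_eq_preimage (b : M) (V : Submodule k M) :
    (AffineSubspace.mk' b V : Set M) = (· - b) ⁻¹' V := by
  ext x
  simp [AffineSubspace.mem_mk', vsub_eq_sub]

variable [TopologicalSpace M]

theorem Filter.hasClosedAffineBasis_sInf {c : Set (Filter M)} (hc : IsChain (· ≥ ·) c)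
    (hne : c.Nonempty) (hcS : ∀ G ∈ c, G.NeBot ∧ G.HasClosedAffineBasis k) :
    (sInf c).NeBot ∧ (sInf c).HasClosedAffineBasis k := by
  have hdir := hc.directedOn.directed_val
  have := hne.to_subtype
  rw [sInf_eq_iInf']
  refine ⟨iInf_neBot_of_directed' hdir fun G => (hcS G G.2).1, fun t ht => ?_⟩
  obtain ⟨G, htG⟩ := (mem_iInf_of_directed hdir t).1 ht
  obtain ⟨s, hsc, hsG, hst⟩ := (hcS G G.2).2 t htG
  exact ⟨s, hsc, iInf_le (fun G : c => (G : Filter M)) G hsG, hst⟩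

theorem Filter.exists_minimal_hasClosedAffineBasis_le {F : Filter M} [F.NeBot]
    (hF : F.HasClosedAffineBasis k) :
    ∃ G ≤ F, Minimal (fun G : Filter M => G.NeBot ∧ G.HasClosedAffineBasis k) G :=
  @zorn_le_nonempty₀ (Filter M)ᵒᵈ _ _ (fun c hcS hc G hG =>
    ⟨OrderDual.toDual (sInf (OrderDual.ofDual ⁻¹' c)), hasClosedAffineBasis_sInf hc ⟨G, hG⟩ hcS,
      fun _ hz => OrderDual.le_toDual.mpr (sInf_le hz)⟩) F ⟨‹_›, hF⟩

variable [IsTopologicalAddGroup M]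

theorem AffineSubspace.isOpen_mk' (b : M) {V : Submodule k M} (hV : IsOpen (V : Set M)) :
    IsOpen (AffineSubspace.mk' b V : Set M) := by
  rw [coe_mk'_eq_preimage]
  exact hV.preimage (continuous_sub_right b)

theorem AffineSubspace.isClosed_mk' (b : M) {V : Submodule k M} (hV : IsOpen (V : Set M)) :
    IsClosed (AffineSubspace.mk' b V : Set M) := by
  rw [coe_mk'_eq_preimage]
  exact (V.toAddSubgroup.isClosed_of_isOpen hV).preimage (continuous_sub_right b)

theorem HasOpenFiniteCodimBasis.isLinearTopology (hM : HasOpenFiniteCodimBasis k M) :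
    IsLinearTopology k M :=
  isLinearTopology_iff_hasBasis_open_submodule.2 ⟨fun t =>
    ⟨fun ht => let ⟨p, hpo, _, hpt⟩ := hM t ht; ⟨p, hpo, hpt⟩,
      fun ⟨p, hpo, hpt⟩ => mem_of_superset (hpo.mem_nhds p.zero_mem) hpt⟩⟩

theorem Filter.exists_mk'_mem_of_minimal {F : Filter M}
    (hF : Minimal (fun G : Filter M => G.NeBot ∧ G.HasClosedAffineBasis k) F)
    {V : Submodule k M} (hVo : IsOpen (V : Set M)) [FiniteDimensional k (M ⧸ V)] :
    ∃ b, ((AffineSubspace.mk' b V : AffineSubspace k M) : Set M) ∈ F := by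
  obtain ⟨⟨hne, hbasis⟩, hmin⟩ := hF
  -- `s₀` has a minimal image of its direction in `M ⧸ V`, which then every smaller member of
  -- `F` shares; so `b + V` meets all of them.
  let D (s : AffineSubspace k M) : Submodule k (M ⧸ V) := s.direction.map V.mkQ
  obtain ⟨s₀, ⟨-, hs₀F⟩, hs₀min⟩ := (InvImage.wf D wellFounded_lt).has_min
    {s | IsClosed (s : Set M) ∧ (s : Set M) ∈ F}
    (let ⟨s, hsc, hsF, _⟩ := hbasis univ univ_mem; ⟨s, hsc, hsF⟩)
  obtain ⟨b, hb⟩ := hne.nonempty_of_mem hs₀F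
  have meets : ∀ u : AffineSubspace k M, IsClosed (u : Set M) → (u : Set M) ∈ F →
      (u : Set M) ⊆ s₀ → ((u : Set M) ∩ AffineSubspace.mk' b V).Nonempty := by
    intro u huc huF hus₀
    have hD : D u = D s₀ := eq_of_le_of_not_lt
      (Submodule.map_mono (AffineSubspace.direction_le hus₀)) (hs₀min u ⟨huc, huF⟩)
    have hsup : V ⊔ s₀.direction = V ⊔ u.direction := by
      simpa only [D, Submodule.comap_map_mkQ] using congrArg (Submodule.comap V.mkQ) hD.symm
    obtain ⟨c, hc⟩ := hne.nonempty_of_mem huF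
    have hbc : b - c ∈ V ⊔ u.direction :=
      hsup ▸ Submodule.mem_sup_right (AffineSubspace.vsub_mem_direction hb (hus₀ hc))
    obtain ⟨v, hv, d, hd, hvd⟩ := Submodule.mem_sup.1 hbc
    refine ⟨d + c, AffineSubspace.vadd_mem_of_mem_direction hd hc, ?_⟩
    rw [SetLike.mem_coe, AffineSubspace.mem_mk', vsub_eq_sub,
      show d + c - b = -v by rw [eq_add_of_sub_eq hvd.symm]; abel]
    exact V.neg_mem hv
  refine ⟨b, hmin (y := F ⊓ 𝓟 (AffineSubspace.mk' b V : Set M)) ⟨?_, ?_⟩ inf_le_left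
    (mem_inf_of_right (mem_principal_self _))⟩
  · refine inf_principal_neBot_iff.2 fun t ht => ?_
    obtain ⟨u, huc, huF, hut⟩ := hbasis _ (inter_mem ht hs₀F)
    exact (meets u huc huF fun x hx => (hut hx).2).mono
      (inter_subset_inter_left _ fun x hx => (hut hx).1)
  · intro t ht
    obtain ⟨u, huc, huF, hut⟩ := hbasis _ (inter_mem (mem_inf_principal.1 ht) hs₀F)
    exact ⟨u ⊓ AffineSubspace.mk' b V, huc.inter (AffineSubspace.isClosed_mk' b hVo),
      inter_mem_inf huF (mem_principal_self _), fun x hx => (hut hx.1).1 hx.2⟩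

end LinearCompactness

section Complete

variable {k M : Type*} [Field k] [AddCommGroup M] [Module k M] [UniformSpace M]
  [IsUniformAddGroup M] [CompleteSpace M]

theorem HasOpenFiniteCodimBasis.exists_clusterPt (hM : HasOpenFiniteCodimBasis k M)
    {F : Filter M} [F.NeBot] (hF : F.HasClosedAffineBasis k) : ∃ m, ClusterPt m F := by
  obtain ⟨G, hGF, hG⟩ := exists_minimal_hasClosedAffineBasis_le hF
  have := hG.prop.1
  have hGc : Cauchy G := by
    refine (IsUniformAddGroup.cauchy_iff_tendsto G).2 ⟨this, fun N hN => ?_⟩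
    obtain ⟨V, hVo, hVfd, hVN⟩ := hM N hN
    obtain ⟨b, hb⟩ := exists_mk'_mem_of_minimal hG hVo
    refine mem_map.2 (mem_of_superset (prod_mem_prod hb hb) fun p ⟨h₁, h₂⟩ => hVN ?_)
    rw [SetLike.mem_coe, AffineSubspace.mem_mk', vsub_eq_sub] at h₁ h₂
    simpa using V.sub_mem h₁ h₂
  obtain ⟨m, hm⟩ := CompleteSpace.complete hGc
  exact ⟨m, (ClusterPt.of_le_nhds hm).mono hGF⟩

theorem LinearMap.isClosed_range_of_hasOpenFiniteCodimBasis (hM : HasOpenFiniteCodimBasis k M)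
    {X : Type*} [AddCommGroup X] [Module k X] [TopologicalSpace X] [IsTopologicalAddGroup X]
    [IsLinearTopology k X] [T2Space X] (φ : M →ₗ[k] X) (hφ : Continuous φ) :
    IsClosed (Set.range φ) := by
  refine isClosed_of_closure_subset fun x hx => ?_
  have : (comap φ (𝓝 x)).NeBot := comap_neBot_iff.2 fun t ht =>
    let ⟨_, hyt, a, ha⟩ := mem_closure_iff_nhds.1 hx t ht
    ⟨a, ha ▸ hyt⟩
  have hbasis : (comap φ (𝓝 x)).HasClosedAffineBasis k := by
    intro t ht
    obtain ⟨t', ht', ht't⟩ := mem_comap.1 ht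
    rw [← map_add_left_nhds_zero, mem_map] at ht'
    obtain ⟨p, hpo, hpt'⟩ := (IsLinearTopology.hasBasis_open_submodule k).mem_iff.1 ht'
    refine ⟨(AffineSubspace.mk' x p).comap φ.toAffineMap,
      (AffineSubspace.isClosed_mk' x hpo).preimage hφ,
      preimage_mem_comap ((AffineSubspace.isOpen_mk' x hpo).mem_nhds
        (AffineSubspace.self_mem_mk' x p)), fun y hy => ht't ?_⟩
    simpa using hpt' hy
  obtain ⟨m, hm⟩ := hM.exists_clusterPt hbasis
  exact ⟨m, eq_of_nhds_neBot (hm.map hφ.continuousAt tendsto_comap)⟩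

end Complete

theorem HasOpenFiniteCodimBasis.pi {k ι : Type*} [Field k] [Finite ι] {M : ι → Type*}
    [∀ i, AddCommGroup (M i)] [∀ i, Module k (M i)] [∀ i, TopologicalSpace (M i)]
    (h : ∀ i, HasOpenFiniteCodimBasis k (M i)) : HasOpenFiniteCodimBasis k (∀ i, M i) := by
  classical
  have := Fintype.ofFinite ι
  intro s hs
  rw [nhds_pi, Filter.mem_pi] at hs
  obtain ⟨I, -, t, ht, hts⟩ := hs
  choose p hpo hpfd hpt using fun i => h i (t i) (ht i)
  refine ⟨Submodule.pi univ p, ?_, Module.Finite.equiv (Submodule.quotientPi p).symm,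
    fun x hx => hts fun i _ => hpt i (hx i (mem_univ i))⟩
  rw [Submodule.coe_pi]
  exact isOpen_set_pi finite_univ fun i _ => hpo i

theorem Submodule.isOpen_of_le {R M : Type*} [Ring R] [AddCommGroup M] [Module R M]
    [TopologicalSpace M] [IsTopologicalAddGroup M] {U P : Submodule R M} (h : U ≤ P)
    (hU : IsOpen (U : Set M)) : IsOpen (P : Set M) :=
  AddSubgroup.isOpen_mono (H₁ := U.toAddSubgroup) (H₂ := P.toAddSubgroup) h hU

theorem Submodule.exists_fg_le_sup_ker_of_fg_map {R M N : Type*} [Ring R] [AddCommGroup M]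
    [Module R M] [AddCommGroup N] [Module R N] {f : M →ₗ[R] N} {P : Submodule R M}
    (h : (P.map f).FG) : ∃ W ≤ P, W.FG ∧ P ≤ W ⊔ LinearMap.ker f := by
  classical
  obtain ⟨S, hS⟩ := h
  have hSP : (S : Set N) ⊆ f '' P := by
    rw [← Submodule.map_coe, ← hS]
    exact Submodule.subset_span
  obtain ⟨T, hTP, rfl⟩ := Finset.subset_set_image_iff.1 hSP
  refine ⟨span R T, span_le.2 hTP, ⟨T, rfl⟩, (LinearMap.map_le_map_iff f).1 ?_⟩
  rw [← hS, Submodule.map_span, Finset.coe_image]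

section OpenJacobson

variable {A : Type} [Ring A] [TopologicalSpace A]

theorem smul_mem_of_mem_openJacobson {M : Type*} [AddCommGroup M] [Module A M]
    {C : Submodule A M} (hC : IsCoatom C) {m : M}
    (hm : IsOpen (C.comap (LinearMap.toSpanSingleton A M m) : Set A)) {j : A}
    (hj : j ∈ openJacobson A) : j • m ∈ C := by
  rcases Submodule.isCoatom_comap_or_eq_top (LinearMap.toSpanSingleton A M m) hC with h | h
  · exact Submodule.mem_sInf.1 hj _ ⟨hm, Ideal.isMaximal_def.2 h⟩
  · exact (h.symm ▸ Submodule.mem_top : j ∈ C.comap (LinearMap.toSpanSingleton A M m))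

instance [IsTopologicalRing A] : (openJacobson A).IsTwoSided :=
  ⟨fun a hj => Submodule.mem_sInf.2 fun _ ⟨hIo, hImax⟩ =>
    smul_mem_of_mem_openJacobson (Ideal.isMaximal_def.1 hImax)
      (hIo.preimage (continuous_mul_const a)) hj⟩

variable [IsTopologicalAddGroup A]

theorem Submodule.eq_bot_of_le_openJacobson_smul {M : Type*} [AddCommGroup M] [Module A M]
    [IsNoetherian A M]
    (hM : ∀ m : M, IsOpen (LinearMap.ker (LinearMap.toSpanSingleton A M m) : Set A))
    {N : Submodule A M} (hN : N ≤ openJacobson A • N) : N = ⊥ := by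
  by_contra hne
  have := Submodule.nontrivial_iff_ne_bot.2 hne
  obtain ⟨C, hC, -⟩ := (eq_top_or_exists_le_coatom (⊥ : Submodule A N)).resolve_left bot_ne_top
  refine hC.1 (top_le_iff.1 ?_)
  calc ⊤ = N.comap N.subtype := N.comap_subtype_self.symm
    _ ≤ (openJacobson A • N).comap N.subtype := Submodule.comap_mono hN
    _ = openJacobson A • ⊤ := by
      rw [Submodule.comap_smul'' N.injective_subtype (by simp), N.comap_subtype_self]
    _ ≤ C := Submodule.smul_le.2 fun j hj n _ => by
      have hker : LinearMap.ker (LinearMap.toSpanSingleton A M n) ≤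
          C.comap (LinearMap.toSpanSingleton A N n) := fun a ha => by
        simp [show a • n = 0 from Subtype.ext ha]
      exact smul_mem_of_mem_openJacobson hC (Submodule.isOpen_of_le hker (hM n)) hj

theorem openJacobson_le_sup_of_isOpen {k : Type} [Field k] [Algebra k A] {W V : Ideal A}
    (hJ : openJacobson A ≤ W ⊔ openJacobson A ^ 2) (hV : ∀ x ∈ V, ∀ b : A, x * b ∈ V)
    (hVo : IsOpen (V : Set A)) (hVfd : FiniteDimensional k (A ⧸ V.restrictScalars k)) :
    openJacobson A ≤ W ⊔ V := by
  set L := W ⊔ V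
  have : FiniteDimensional k (A ⧸ L.restrictScalars k) :=
    Module.Finite.of_surjective (Submodule.factor (Submodule.restrictScalars_mono k le_sup_right :
      V.restrictScalars k ≤ L.restrictScalars k)) (Submodule.factor_surjective _)
  have : FiniteDimensional k (A ⧸ L) :=
    Module.Finite.equiv (Submodule.Quotient.restrictScalarsEquiv k L)
  have : IsNoetherian A (A ⧸ L) := isNoetherian_of_tower k inferInstance
  have hann (m : A ⧸ L) : IsOpen (LinearMap.ker (LinearMap.toSpanSingleton A _ m) : Set A) := by
    obtain ⟨a, rfl⟩ := L.mkQ_surjective m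
    refine Submodule.isOpen_of_le (fun x hx => ?_) hVo
    show x • L.mkQ a = 0
    rw [← map_smul, Submodule.mkQ_apply, Submodule.Quotient.mk_eq_zero, smul_eq_mul]
    exact (le_sup_right : V ≤ L) (hV x hx a)
  have hN : Submodule.map L.mkQ (openJacobson A) ≤
      openJacobson A • Submodule.map L.mkQ (openJacobson A) :=
    calc Submodule.map L.mkQ (openJacobson A)
        ≤ Submodule.map L.mkQ (W ⊔ openJacobson A ^ 2) := Submodule.map_mono hJ
      _ = openJacobson A • Submodule.map L.mkQ (openJacobson A) := by
        rw [Submodule.map_sup, LinearMap.le_ker_iff_map.1 (by rw [L.ker_mkQ]; exact le_sup_left),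
          bot_sup_eq, Submodule.pow_succ, Submodule.pow_one]
        exact Submodule.map_smul'' _ _ _
  have := Submodule.eq_bot_of_le_openJacobson_smul hann hN
  rwa [← LinearMap.le_ker_iff_map, Submodule.ker_mkQ] at this

end OpenJacobson

theorem Jpow_eq_restrictScalars_pow (k A : Type) [Field k] [Ring A] [Algebra k A]
    [TopologicalSpace A] (n : ℕ) : Jpow k A n = (openJacobson A ^ n).restrictScalars k := by
  match n with
  | 0 => simp [Jpow, Submodule.pow_zero]
  | n + 1 =>
    rw [Submodule.restrictScalars_pow n.succ_ne_zero]
    induction n with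
    | zero => exact (pow_one _).symm
    | succ n ih => rw [Jpow, ih, pow_succ' _ (n + 1)]; rfl

theorem IsPseudocompactModule.hasOpenFiniteCodimBasis {k A U : Type} [Field k] [Ring A]
    [Algebra k A] [AddCommGroup U] [Module k U] [Module A U] [IsScalarTower k A U]
    [UniformSpace U] [IsUniformAddGroup U] (hU : IsPseudocompactModule k A U) :
    HasOpenFiniteCodimBasis k U := fun s hs =>
  let ⟨p, hpo, hpfd, hps⟩ := hU.basis s hs
  ⟨p.restrictScalars k, hpo, hpfd, hps⟩

section Pseudocompact

variable {k A : Type} [Field k] [Ring A] [Algebra k A] [UniformSpace A] [IsUniformAddGroup A]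
  [IsTopologicalRing A]

theorem IsPseudocompactAlgebra.isPseudocompactModule (hA : IsPseudocompactAlgebra k A) :
    IsPseudocompactModule k A A :=
  ⟨hA.t2, hA.complete, fun s hs =>
    let ⟨I, _, hIo, hIfd, hIs⟩ := hA.basis s hs
    ⟨I, hIo, hIfd, hIs⟩⟩

theorem Submodule.FG.isClosed_of_isPseudocompact (hA : IsPseudocompactAlgebra k A) {U : Type}
    [AddCommGroup U] [Module k U] [Module A U] [IsScalarTower k A U] [UniformSpace U]
    [IsUniformAddGroup U] [ContinuousSMul A U] (hU : IsPseudocompactModule k A U)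
    {N : Submodule A U} (hN : N.FG) : IsClosed (N : Set U) := by
  obtain ⟨n, v, rfl⟩ := Submodule.fg_iff_exists_fin_generating_family.1 hN
  have := hA.complete
  have := hU.t2
  have := hU.hasOpenFiniteCodimBasis.isLinearTopology
  rw [← Fintype.range_linearCombination]
  exact LinearMap.isClosed_range_of_hasOpenFiniteCodimBasis
    (HasOpenFiniteCodimBasis.pi fun _ => hA.isPseudocompactModule.hasOpenFiniteCodimBasis)
    ((Fintype.linearCombination A v).restrictScalars k)
    (continuous_finsetSum _ fun i _ => (continuous_apply i).smul continuous_const :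
      Continuous fun a : Fin n → A => ∑ i, a i • v i)

theorem IsPseudocompactAlgebra.openJacobson_le_of_le_sup (hA : IsPseudocompactAlgebra k A)
    {W : Ideal A} (hW : IsClosed (W : Set A)) (hJ : openJacobson A ≤ W ⊔ openJacobson A ^ 2) :
    openJacobson A ≤ W := by
  intro x hx
  rw [← SetLike.mem_coe, ← hW.closure_eq, mem_closure_iff_nhds_zero]
  intro t ht
  obtain ⟨V, hV, hVo, hVfd, hVt⟩ := hA.basis t ht
  obtain ⟨w, hw, v, hv, rfl⟩ :=
    Submodule.mem_sup.1 (openJacobson_le_sup_of_isOpen hJ hV hVo hVfd hx)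
  exact ⟨w, hw, by simpa using hVt (V.neg_mem hv)⟩

theorem IsPseudocompactAlgebra.openJacobson_fg (hA : IsPseudocompactAlgebra k A)
    [FiniteDimensional k (A ⧸ (openJacobson A ^ 2).restrictScalars k)] :
    (openJacobson A).FG := by
  have : FiniteDimensional k (A ⧸ openJacobson A ^ 2) :=
    Module.Finite.equiv (Submodule.Quotient.restrictScalarsEquiv k _)
  have : IsNoetherian A (A ⧸ openJacobson A ^ 2) := isNoetherian_of_tower k inferInstance
  obtain ⟨W, hWJ, hWfg, hJW⟩ := Submodule.exists_fg_le_sup_ker_of_fg_map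
    (IsNoetherian.noetherian (Submodule.map (openJacobson A ^ 2).mkQ (openJacobson A)))
  rw [Submodule.ker_mkQ] at hJW
  have hWc := hWfg.isClosed_of_isPseudocompact hA hA.isPseudocompactModule
  rwa [← le_antisymm (hA.openJacobson_le_of_le_sup hWc hJW) hWJ] at hWfg

end Pseudocompact

theorem JU_closed_and_Jpow_closed_fg_general
    (k : Type) [Field k]
    (A : Type) [Ring A] [Algebra k A] [UniformSpace A] [IsUniformAddGroup A] [IsTopologicalRing A]
    (hA : IsPseudocompactAlgebra k A)
    (hfd : FiniteDimensional k (A ⧸ Jpow k A 2)) :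
    (∀ (U : Type) (_ : AddCommGroup U) (_ : Module k U) (_ : Module A U)
        (_ : IsScalarTower k A U) (_ : UniformSpace U) (_ : IsUniformAddGroup U)
        (_ : ContinuousSMul A U),
        IsPseudocompactModule k A U → Module.Finite A U →
        IsClosed ((openJacobson A • (⊤ : Submodule A U) : Submodule A U) : Set U)) ∧
    (∀ n : ℕ, IsClosed ((Jpow k A n : Submodule k A) : Set A) ∧
        ∃ s : Finset A, (Submodule.span A (s : Set A)).restrictScalars k = Jpow k A n) := by
  rw [Jpow_eq_restrictScalars_pow] at hfd
  have hJ : (openJacobson A).FG := hA.openJacobson_fg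
  refine ⟨fun U _ _ _ _ _ _ _ hU _ =>
    (Submodule.FG.smul hJ Module.Finite.fg_top).isClosed_of_isPseudocompact hA hU, fun n => ?_⟩
  have hJn : (openJacobson A ^ n).FG := hJ.pow
  rw [Jpow_eq_restrictScalars_pow]
  refine ⟨Submodule.FG.isClosed_of_isPseudocompact hA hA.isPseudocompactModule hJn, ?_⟩
  obtain ⟨s, hs⟩ := hJn
  exact ⟨s, congrArg _ hs⟩

/-- Let `A` be a pseudocompact `k`-algebra with `A/J²(A)` finite
dimensional.  Then (1) for every finitely generated pseudocompact `A`-module `U` the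
submodule `J(A)·U` is closed in `U`, and (2) for every `n`, `Jⁿ(A)` is a closed,
finitely generated (as an `A`-module, i.e. left ideal) submodule of `A`. -/
theorem JU_closed_and_Jpow_closed_fg
    (k : Type) [Field k] [PerfectField k]
    (A : Type) [Ring A] [Algebra k A] [UniformSpace A] [IsUniformAddGroup A] [IsTopologicalRing A]
    (hA : IsPseudocompactAlgebra k A)
    (hfd : FiniteDimensional k (A ⧸ Jpow k A 2)) :
    (∀ (U : Type) (_ : AddCommGroup U) (_ : Module k U) (_ : Module A U)
        (_ : IsScalarTower k A U) (_ : UniformSpace U) (_ : IsUniformAddGroup U)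
        (_ : ContinuousSMul A U),
        IsPseudocompactModule k A U → Module.Finite A U →
        IsClosed ((openJacobson A • (⊤ : Submodule A U) : Submodule A U) : Set U)) ∧
    (∀ n : ℕ, IsClosed ((Jpow k A n : Submodule k A) : Set A) ∧
        ∃ s : Finset A, (Submodule.span A (s : Set A)).restrictScalars k = Jpow k A n) :=
  JU_closed_and_Jpow_closed_fg_general k A hA hfd
end

section
/- Let A be a pseudocompact k-algebra such that A/J²(A) is finite dimensional over k. Then A is complete with respect to the J-adic topology; that is, the canonical map A → lim_{n∈ℕ} A/Jⁿ(A) induced by the quotient maps A → A/Jⁿ(A) is an isomorphism. -/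
/-! Every open two-sided ideal `I` of finite codimension contains a power of `J`: the algebra
`A/I` is Artinian, so its Jacobson radical, which contains the image of `J`, is nilpotent. Hence
`A` is `J`-adically separated and `J`-adic Cauchy sequences converge in `A`.

The limit has the right residues modulo `Jᵐ` once series with terms in `Jᵐ⁺ⁿ` sum into `Jᵐ`.
Since `A/J²` is finite dimensional, `J = S + J²` for the span `S` of a finite set `G ⊆ J`, so a
compatible family can be corrected until its `n`-th difference lies in `Sⁿ`. A series with terms
in `S·Sⁿ⁺ᵐ` is `∑_{g ∈ G} g · (a series with terms in Sⁿ⁺ᵐ)`, and induction on `m`, starting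
from the closedness of `J`, puts its sum in `Jᵐ`. -/

open Filter Topology

theorem Submodule.exists_finset_map_span_eq {R M N : Type*} [Semiring R] [AddCommMonoid M]
    [AddCommMonoid N] [Module R M] [Module R N] (f : M →ₗ[R] N) {P : Submodule R M}
    (hP : (P.map f).FG) : ∃ G : Finset M, (G : Set M) ⊆ P ∧ (span R ↑G).map f = P.map f := by
  classical
  obtain ⟨t, ht⟩ := hP
  have htP : (t : Set N) ⊆ f '' P := fun y hy => mem_map.1 (ht ▸ subset_span hy)
  obtain ⟨G, hGP, rfl⟩ := Finset.subset_set_image_iff.1 htP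
  exact ⟨G, hGP, by rw [map_span, ← ht, Finset.coe_image]⟩

theorem Submodule.exists_mul_sum_of_mem_span_mul {k A : Type*} [CommSemiring k] [Semiring A]
    [Algebra k A] {G : Finset A} {T : Submodule k A} {x : A} (hx : x ∈ span k ↑G * T) :
    ∃ y : A → A, (∀ g, y g ∈ T) ∧ x = ∑ g ∈ G, g * y g := by
  refine Submodule.mul_induction_on hx (fun s hs t ht => ?_)
    fun x₁ x₂ ⟨y₁, hy₁, h₁⟩ ⟨y₂, hy₂, h₂⟩ => ⟨y₁ + y₂, fun g => add_mem (hy₁ g) (hy₂ g),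
      by simp [h₁, h₂, mul_add, Finset.sum_add_distrib]⟩
  obtain ⟨c, -, rfl⟩ := mem_span_finset.1 hs
  exact ⟨fun g => c g • t, fun g => T.smul_mem _ ht, by simp [Finset.sum_mul]⟩

section Radical

variable {k : Type} [Field k] {A : Type} [Ring A] [Algebra k A] [TopologicalSpace A]

theorem mul_mem_jpow (a : A) {x : A} : ∀ {n : ℕ}, x ∈ Jpow k A n → a * x ∈ Jpow k A n
  | 0, _ => Submodule.mem_top
  | 1, hx => (openJacobson A).smul_mem a hx
  | _ + 2, hx => Submodule.mul_induction_on hx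
      (fun y hy z hz => mul_assoc a y z ▸
        Submodule.mul_mem_mul ((openJacobson A).smul_mem a hy) hz)
      (fun y z hy hz => (mul_add a y z).symm ▸ add_mem hy hz)

theorem jpow_antitone : Antitone (Jpow k A) :=
  antitone_nat_of_succ_le fun
    | 0 => le_top
    | _ + 1 => Submodule.mul_le.2 fun _ _ _ hy => mul_mem_jpow _ hy

/- Exponents are shifted by one: `Jrad k A * Jpow k A 0 ≤ Jpow k A 1` would need `J` to be
closed under right multiplication. -/
theorem pow_le_jpow {S : Submodule k A} (hS : S ≤ Jrad k A) :
    ∀ n, S ^ (n + 1) ≤ Jpow k A (n + 1)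
  | 0 => (pow_one S).le.trans hS
  | n + 1 => by
    rw [pow_succ']
    exact mul_le_mul' hS (pow_le_jpow hS n)

theorem jpow_le_pow_sup {S : Submodule k A} (hS : S ≤ Jrad k A)
    (hJ : Jrad k A ≤ S ⊔ Jpow k A 2) : ∀ n, Jpow k A (n + 1) ≤ S ^ (n + 1) ⊔ Jpow k A (n + 2)
  | 0 => by rw [zero_add, pow_one]; exact hJ
  | n + 1 => by
    have hJ2 : Jpow k A 2 * S ^ (n + 1) ≤ Jpow k A (n + 3) := by
      rw [show Jpow k A 2 = Jrad k A * Jrad k A from rfl, mul_assoc]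
      exact mul_le_mul_right (mul_le_mul_right (pow_le_jpow hS n) _) _
    calc Jpow k A (n + 2) = Jrad k A * Jpow k A (n + 1) := rfl
      _ ≤ Jrad k A * (S ^ (n + 1) ⊔ Jpow k A (n + 2)) :=
          mul_le_mul_right (jpow_le_pow_sup hS hJ n) _
      _ = Jrad k A * S ^ (n + 1) ⊔ Jpow k A (n + 3) := Submodule.mul_sup _ _ _
      _ ≤ (S ⊔ Jpow k A 2) * S ^ (n + 1) ⊔ Jpow k A (n + 3) :=
          sup_le_sup_right (mul_le_mul_left hJ _) _
      _ = S ^ (n + 2) ⊔ Jpow k A 2 * S ^ (n + 1) ⊔ Jpow k A (n + 3) := by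
          rw [Submodule.sup_mul, ← pow_succ']
      _ ≤ S ^ (n + 2) ⊔ Jpow k A (n + 3) := sup_le (sup_le_sup_left hJ2 _) le_sup_right

theorem exists_finset_jrad_le_span_sup (hfd : FiniteDimensional k (A ⧸ Jpow k A 2)) :
    ∃ G : Finset A, (G : Set A) ⊆ Jrad k A ∧ Jrad k A ≤ Submodule.span k ↑G ⊔ Jpow k A 2 := by
  obtain ⟨G, hGJ, hmap⟩ :=
    Submodule.exists_finset_map_span_eq (Jpow k A 2).mkQ (IsNoetherian.noetherian _)
  refine ⟨G, hGJ, ?_⟩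
  rw [sup_comm, ← Submodule.comap_map_mkQ, hmap, Submodule.comap_map_mkQ]
  exact le_sup_right

theorem exists_seq_sub_mem_pow {S : Submodule k A}
    (hS : ∀ n, Jpow k A (n + 1) ≤ S ^ (n + 1) ⊔ Jpow k A (n + 2))
    {a : ℕ → A} (ha : ∀ n, a (n + 1) - a n ∈ Jpow k A n) :
    ∃ P : ℕ → A, (∀ n, P (n + 1) - P n ∈ S ^ (n + 1)) ∧
      ∀ n, P n - a (n + 1) ∈ Jpow k A (n + 1) := by
  have hstep (n : ℕ) (x : A) :
      ∃ s, x ∈ Jpow k A (n + 1) → s ∈ S ^ (n + 1) ∧ x - s ∈ Jpow k A (n + 2) := by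
    by_cases hx : x ∈ Jpow k A (n + 1)
    · obtain ⟨s, hs, t, ht, rfl⟩ := Submodule.mem_sup.1 (hS n hx)
      exact ⟨s, fun _ => ⟨hs, by rwa [add_sub_cancel_left]⟩⟩
    · exact ⟨0, fun h => (hx h).elim⟩
  choose σ hσ using hstep
  let P : ℕ → A := fun n => Nat.rec (a 1) (fun n p => p + σ n (a (n + 2) - p)) n
  have hPsucc (n : ℕ) : P (n + 1) = P n + σ n (a (n + 2) - P n) := rfl
  have hPa (n : ℕ) :
      P n - a (n + 1) ∈ Jpow k A (n + 1) ∧ a (n + 2) - P n ∈ Jpow k A (n + 1) := by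
    induction n with
    | zero => exact ⟨by simp [P], ha 1⟩
    | succ n ih =>
      have hP : P (n + 1) - a (n + 2) ∈ Jpow k A (n + 2) := by
        rw [hPsucc, ← neg_mem_iff, neg_sub, sub_add_eq_sub_sub]
        exact (hσ n _ ih.2).2
      refine ⟨hP, ?_⟩
      rw [← sub_add_sub_cancel _ (a (n + 2)), ← neg_sub (P (n + 1))]
      exact add_mem (ha (n + 2)) (neg_mem hP)
  refine ⟨P, fun n => ?_, fun n => (hPa n).1⟩
  rw [hPsucc, add_sub_cancel_left]
  exact (hσ n _ (hPa n).2).1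

variable [SeparatelyContinuousAdd A]

theorem jrad_isClosed : IsClosed (Jrad k A : Set A) := by
  rw [Jrad, Submodule.coe_restrictScalars, openJacobson, Submodule.coe_sInf]
  exact isClosed_biInter fun M hM => AddSubgroup.isClosed_of_isOpen M.toAddSubgroup hM.1

theorem jrad_subset_preimage_jacobson {I : Ideal A} [I.IsTwoSided] (hI : IsOpen (I : Set A)) :
    (Jrad k A : Set A) ⊆ Ideal.Quotient.mk I ⁻¹' (Ideal.jacobson ⊥ : Ideal (A ⧸ I)) := by
  intro x hx
  refine Submodule.mem_sInf.2 fun M ⟨_, hM⟩ => ?_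
  have hle : I ≤ Ideal.comap (Ideal.Quotient.mk I) M := fun y hy => by
    simp [Ideal.Quotient.eq_zero_iff_mem.2 hy]
  exact Submodule.mem_sInf.1 hx _
    ⟨AddSubgroup.isOpen_mono (H₁ := I.toAddSubgroup) (H₂ := (Ideal.comap _ M).toAddSubgroup)
      hle hI,
      Ideal.comap_isMaximal_of_surjective _ Ideal.Quotient.mk_surjective⟩

theorem exists_jpow_le {I : Ideal A} (hIright : ∀ x ∈ I, ∀ b : A, x * b ∈ I)
    (hIopen : IsOpen (I : Set A)) (hIfin : FiniteDimensional k (A ⧸ I.restrictScalars k)) :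
    ∃ N, Jpow k A N ≤ I.restrictScalars k := by
  have : I.IsTwoSided := ⟨fun b ha => hIright _ ha b⟩
  have : Module.Finite k (A ⧸ I) :=
    Module.Finite.equiv (Submodule.Quotient.restrictScalarsEquiv k I)
  have : IsArtinianRing (A ⧸ I) := IsArtinianRing.of_finite k (A ⧸ I)
  obtain ⟨N, hN⟩ := IsArtinianRing.isNilpotent_jacobson_bot (R := A ⧸ I)
  have hJ := jrad_subset_preimage_jacobson (k := k) hIopen
  have hpow (n : ℕ) : ∀ x ∈ Jpow k A (n + 1),
      Ideal.Quotient.mk I x ∈ (Ideal.jacobson ⊥ : Ideal (A ⧸ I)) ^ (n + 1) := by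
    induction n with
    | zero => exact fun x hx => by rw [zero_add, Submodule.pow_one]; exact hJ hx
    | succ n ih =>
      refine fun x hx => Submodule.mul_induction_on hx (fun y hy z hz => ?_)
        (fun y z hy hz => by rw [map_add]; exact add_mem hy hz)
      rw [map_mul, Submodule.pow_succ' _ n.succ_ne_zero]
      exact Submodule.mul_mem_mul (hJ hy) (ih z hz)
  refine ⟨N + 1, fun x hx => Ideal.Quotient.eq_zero_iff_mem.1 ?_⟩
  simpa [Submodule.pow_succ, hN] using hpow N x hx

end Radical

namespace IsPseudocompactAlgebra

variable {k : Type} [Field k] {A : Type} [Ring A] [Algebra k A]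
  [UniformSpace A] [IsUniformAddGroup A] [IsTopologicalRing A] (hA : IsPseudocompactAlgebra k A)
include hA

theorem nonarchimedeanAddGroup : NonarchimedeanAddGroup A where
  is_nonarchimedean s hs := by
    obtain ⟨I, -, hIopen, -, hIs⟩ := hA.basis s hs
    exact ⟨⟨I.toAddSubgroup, hIopen⟩, hIs⟩

theorem tendsto_zero_of_mem_jpow {e : ℕ → A} (he : ∀ n, e n ∈ Jpow k A n) :
    Tendsto e atTop (𝓝 0) := fun s hs => by
  obtain ⟨I, hIright, hIopen, hIfin, hIs⟩ := hA.basis s hs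
  obtain ⟨N, hN⟩ := exists_jpow_le hIright hIopen hIfin
  exact mem_atTop_sets.2 ⟨N, fun n hn => hIs (hN (jpow_antitone hn (he n)))⟩

theorem summable_of_mem_jpow {e : ℕ → A} (he : ∀ n, e n ∈ Jpow k A n) : Summable e := by
  have := hA.nonarchimedeanAddGroup
  have := hA.complete
  exact NonarchimedeanAddGroup.summable_of_tendsto_cofinite_zero
    (Nat.cofinite_eq_atTop ▸ hA.tendsto_zero_of_mem_jpow he)

theorem eq_zero_of_forall_mem_jpow {x : A} (hx : ∀ n, x ∈ Jpow k A n) : x = 0 :=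
  have := hA.t2
  tendsto_nhds_unique tendsto_const_nhds (hA.tendsto_zero_of_mem_jpow hx)

theorem tsum_mem_jpow {G : Finset A} (hG : (G : Set A) ⊆ Jrad k A) (m : ℕ) {e : ℕ → A}
    (he : ∀ n, e n ∈ Submodule.span k (G : Set A) ^ (m + n + 1)) :
    ∑' n, e n ∈ Jpow k A (m + 1) := by
  have hGJ : Submodule.span k (G : Set A) ≤ Jrad k A := Submodule.span_le.2 hG
  induction m generalizing e with
  | zero =>
    exact tsum_mem jrad_isClosed fun n =>
      jpow_antitone (show 1 ≤ n + 1 by omega) (pow_le_jpow hGJ n (by simpa using he n))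
  | succ m ih =>
    have := hA.t2
    have hmem (n : ℕ) :
        e n ∈ Submodule.span k (G : Set A) * Submodule.span k ↑G ^ (m + n + 1) := by
      rw [← pow_succ']
      exact (show m + 1 + n + 1 = m + n + 1 + 1 by omega) ▸ he n
    choose y hy hey using fun n => Submodule.exists_mul_sum_of_mem_span_mul (hmem n)
    have hsum (g : A) : Summable (y · g) := hA.summable_of_mem_jpow fun n =>
      jpow_antitone (show n ≤ m + n + 1 by omega) (pow_le_jpow hGJ _ (hy n g))
    rw [tsum_congr hey, Summable.tsum_finsetSum fun g _ => (hsum g).mul_left g]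
    refine Submodule.sum_mem _ fun g hg => ?_
    rw [(hsum g).tsum_mul_left]
    exact Submodule.mul_mem_mul (hG hg) (ih fun n => hy n g)

theorem exists_sub_mem_jpow {G : Finset A} (hG : (G : Set A) ⊆ Jrad k A) {P : ℕ → A}
    (hP : ∀ n, P (n + 1) - P n ∈ Submodule.span k (G : Set A) ^ (n + 1)) :
    ∃ b, ∀ m, b - P m ∈ Jpow k A (m + 1) := by
  have := hA.t2
  have hd : Summable fun n => P (n + 1) - P n := hA.summable_of_mem_jpow fun n =>
    jpow_antitone n.le_succ (pow_le_jpow (Submodule.span_le.2 hG) n (hP n))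
  refine ⟨P 0 + ∑' n, (P (n + 1) - P n), fun m => ?_⟩
  rw [← hd.sum_add_tsum_nat_add m, Finset.sum_range_sub, ← add_assoc, add_sub_cancel,
    add_sub_cancel_left]
  exact hA.tsum_mem_jpow hG m fun n => add_comm n m ▸ hP (n + m)

end IsPseudocompactAlgebra

theorem jadic_complete_general
    (k : Type) [Field k]
    (A : Type) [Ring A] [Algebra k A] [UniformSpace A] [IsUniformAddGroup A] [IsTopologicalRing A]
    (hA : IsPseudocompactAlgebra k A)
    (hfd : FiniteDimensional k (A ⧸ Jpow k A 2)) :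
    Function.Injective
      (fun (a : A) (n : ℕ) => (Submodule.Quotient.mk a : A ⧸ Jpow k A n)) ∧
    ∀ f : (n : ℕ) → A ⧸ Jpow k A n,
      (∀ n : ℕ, ∃ a : A, ∀ m : ℕ, m ≤ n → (Submodule.Quotient.mk a : A ⧸ Jpow k A m) = f m) →
      ∃ a : A, ∀ n : ℕ, (Submodule.Quotient.mk a : A ⧸ Jpow k A n) = f n := by
  refine ⟨fun x y hxy => sub_eq_zero.1 <| hA.eq_zero_of_forall_mem_jpow fun n =>
    (Submodule.Quotient.eq _).1 (congrFun hxy n), fun f hf => ?_⟩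
  choose a ha using hf
  have hdiff (n : ℕ) : a (n + 1) - a n ∈ Jpow k A n :=
    (Submodule.Quotient.eq _).1 ((ha (n + 1) n n.le_succ).trans (ha n n le_rfl).symm)
  obtain ⟨G, hGJ, hJ⟩ := exists_finset_jrad_le_span_sup hfd
  obtain ⟨P, hPS, hPa⟩ :=
    exists_seq_sub_mem_pow (jpow_le_pow_sup (Submodule.span_le.2 hGJ) hJ) hdiff
  obtain ⟨b, hb⟩ := hA.exists_sub_mem_jpow hGJ hPS
  refine ⟨b, fun n => ?_⟩
  cases n with
  | zero => exact (Submodule.Quotient.eq _).2 Submodule.mem_top |>.trans (ha 0 0 le_rfl)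
  | succ m =>
    rw [← ha (m + 1) (m + 1) le_rfl, Submodule.Quotient.eq, ← sub_add_sub_cancel _ (P m)]
    exact add_mem (hb m) (hPa m)

/-- Let `A` be a pseudocompact `k`-algebra with `A/J²(A)` finite
dimensional.  Then `A` is complete with respect to the `J`-adic topology: the canonical
map `A → lim_n A/Jⁿ(A)` is an isomorphism.  This is encoded as:  the canonical map
`a ↦ (a + Jⁿ(A))ₙ` is injective, and every compatible family of cosets (i.e. every element
of the inverse limit `lim_n A/Jⁿ(A)`) is in its image. -/
theorem jadic_complete
    (k : Type) [Field k] [PerfectField k]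
    (A : Type) [Ring A] [Algebra k A] [UniformSpace A] [IsUniformAddGroup A] [IsTopologicalRing A]
    (hA : IsPseudocompactAlgebra k A)
    (hfd : FiniteDimensional k (A ⧸ Jpow k A 2)) :
    Function.Injective
      (fun (a : A) (n : ℕ) => (Submodule.Quotient.mk a : A ⧸ Jpow k A n)) ∧
    ∀ f : (n : ℕ) → A ⧸ Jpow k A n,
      (∀ n : ℕ, ∃ a : A, ∀ m : ℕ, m ≤ n → (Submodule.Quotient.mk a : A ⧸ Jpow k A m) = f m) →
      ∃ a : A, ∀ n : ℕ, (Submodule.Quotient.mk a : A ⧸ Jpow k A n) = f n :=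
  jadic_complete_general k A hA hfd
end

section
/- Let A and B be pointed pseudocompact k-algebras whose radical quotients A/J(A) and B/J(B) are finite dimensional, and let α : A → B be a continuous unital algebra homomorphism. Then α respects primitive idempotents (i.e., α(e) is a primitive idempotent of B whenever e is a primitive idempotent of A) if and only if the induced algebra homomorphism A/J(A) → B/J(B) is surjective. -/
/-- A *primitive idempotent* is an idempotent which cannot be written as the sum of two
non-zero orthogonal idempotents. -/
def IsPrimitiveIdempotent {A : Type} [Ring A] (e : A) : Prop :=
  IsIdempotentElem e ∧
    ¬ ∃ f g : A, IsIdempotentElem f ∧ IsIdempotentElem g ∧ f ≠ 0 ∧ g ≠ 0 ∧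
      f * g = 0 ∧ g * f = 0 ∧ e = f + g

/-! Elements of `J(A)` are topologically nilpotent: for every open ideal `I` of finite
codimension, `A/I` is Artinian, so its Jacobson radical is nilpotent. Hence `1 - x` is a unit
for `x ∈ J(A)` (geometric series), and idempotents lift modulo `J(A)` by the iteration
`t ↦ 3t² - 2t³`, which converges by completeness. The first fact makes every character
`A → k` kill `J(A)`, so the composite `A → B → B/J(B) = kᵐ` is `x ↦ φ_A(x) ∘ σ` for a map
`σ : Fin m → Fin n`; the second shows that an idempotent is primitive exactly when its image
in `kⁿ` has at most one non-zero coordinate. Each side of the equivalence then says that `σ`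
is injective. -/

open Filter Topology Function Polynomial

theorem IsIdempotentElem.apply_eq_zero_or_one {ι G₀ : Type*} [MonoidWithZero G₀]
    [IsLeftCancelMulZero G₀] {u : ι → G₀} (hu : IsIdempotentElem u) (i : ι) :
    u i = 0 ∨ u i = 1 :=
  IsIdempotentElem.iff_eq_zero_or_one.1 (congrFun hu i)

theorem isClosed_openJacobson {A : Type} [Ring A] [TopologicalSpace A]
    [IsTopologicalAddGroup A] : IsClosed (openJacobson A : Set A) := by
  rw [openJacobson, Submodule.coe_sInf]
  exact isClosed_biInter fun I hI ↦ AddSubgroup.isClosed_of_isOpen I.toAddSubgroup hI.1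

theorem IsTopologicallyNilpotent.isUnit_one_sub {R : Type*} [Ring R] [UniformSpace R]
    [IsUniformAddGroup R] [NonarchimedeanAddGroup R] [IsTopologicalRing R] [CompleteSpace R]
    [T2Space R] {x : R} (hx : IsTopologicallyNilpotent x) : IsUnit (1 - x) := by
  have hs : Summable (x ^ ·) :=
    NonarchimedeanAddGroup.summable_of_tendsto_cofinite_zero (by rwa [Nat.cofinite_eq_atTop])
  exact ⟨⟨1 - x, ∑' i, x ^ i, hs.one_sub_mul_tsum_pow, hs.tsum_pow_mul_one_sub⟩, rfl⟩

noncomputable def idempotentRefinement : ℕ → ℤ[X]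
  | 0 => X
  | n + 1 => 3 * idempotentRefinement n ^ 2 - 2 * idempotentRefinement n ^ 3

theorem idempotentRefinement_succ_sub (n : ℕ) :
    idempotentRefinement (n + 1) - idempotentRefinement n =
      -(2 * idempotentRefinement n - 1) *
        (idempotentRefinement n ^ 2 - idempotentRefinement n) := by
  rw [idempotentRefinement]; ring

theorem pow_dvd_sq_sub_idempotentRefinement (n : ℕ) :
    (X ^ 2 - X) ^ 2 ^ n ∣ idempotentRefinement n ^ 2 - idempotentRefinement n := by
  induction n with
  | zero => simp [idempotentRefinement]
  | succ n ih =>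
    have hsq : idempotentRefinement (n + 1) ^ 2 - idempotentRefinement (n + 1) =
        (idempotentRefinement n ^ 2 - idempotentRefinement n) ^ 2 *
          (4 * idempotentRefinement n ^ 2 - 4 * idempotentRefinement n - 3) := by
      rw [idempotentRefinement]; ring
    rw [hsq, pow_succ 2 n, pow_mul]
    exact (pow_dvd_pow_of_dvd ih 2).mul_right _

theorem sq_sub_dvd_idempotentRefinement_sub (n : ℕ) :
    X ^ 2 - X ∣ idempotentRefinement n - X := by
  induction n with
  | zero => simp [idempotentRefinement]
  | succ n ih =>
    have hstep : X ^ 2 - X ∣ idempotentRefinement (n + 1) - idempotentRefinement n :=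
      idempotentRefinement_succ_sub n ▸ ((dvd_pow_self _ (pow_ne_zero n two_ne_zero)).trans
        (pow_dvd_sq_sub_idempotentRefinement n)).mul_left _
    simpa using hstep.add ih

theorem X_dvd_idempotentRefinement (n : ℕ) : X ∣ idempotentRefinement n := by
  have h : (X : ℤ[X]) ∣ X ^ 2 - X := Dvd.intro (X - 1) (by ring)
  simpa using (h.trans (sq_sub_dvd_idempotentRefinement_sub n)).add (dvd_refl X)

section Lifting

variable {R : Type*} [Ring R]

theorem tendsto_aeval_idempotentRefinement_sq_sub [TopologicalSpace R]
    [IsLinearTopology Rᵐᵒᵖ R] {x : R} (hx : IsTopologicallyNilpotent (x ^ 2 - x)) :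
    Tendsto (fun n ↦ aeval x (idempotentRefinement n) ^ 2 - aeval x (idempotentRefinement n))
      atTop (𝓝 0) := by
  choose q hq using pow_dvd_sq_sub_idempotentRefinement
  have h n : aeval x (idempotentRefinement n) ^ 2 - aeval x (idempotentRefinement n) =
      (x ^ 2 - x) ^ 2 ^ n * aeval x (q n) := by
    simpa using congrArg (aeval x) (hq n)
  simp_rw [h]
  exact IsLinearTopology.tendsto_mul_zero_of_left _ _
    (hx.comp (tendsto_pow_atTop_atTop_of_one_lt one_lt_two))

variable [UniformSpace R] [IsUniformAddGroup R] [NonarchimedeanAddGroup R]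
  [IsLinearTopology R R] [IsLinearTopology Rᵐᵒᵖ R]

theorem cauchySeq_aeval_idempotentRefinement {x : R}
    (hx : IsTopologicallyNilpotent (x ^ 2 - x)) :
    CauchySeq (fun n ↦ aeval x (idempotentRefinement n)) := by
  refine NonarchimedeanAddGroup.cauchySeq_of_tendsto_sub_nhds_zero ?_
  have h n : aeval x (idempotentRefinement (n + 1)) - aeval x (idempotentRefinement n) =
      -(2 * aeval x (idempotentRefinement n) - 1) *
        (aeval x (idempotentRefinement n) ^ 2 - aeval x (idempotentRefinement n)) := by
    simpa only [map_sub, map_mul, map_neg, map_pow, map_one, map_ofNat] using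
      congrArg (aeval x) (idempotentRefinement_succ_sub n)
  simp_rw [h]
  exact IsLinearTopology.tendsto_mul_zero_of_right _ _
    (tendsto_aeval_idempotentRefinement_sq_sub hx)

theorem exists_isIdempotentElem_sub_mem [IsTopologicalRing R] [CompleteSpace R] [T2Space R]
    {J : Ideal R} (hJ : IsClosed (J : Set R)) {x e : R} (hxJ : x ^ 2 - x ∈ J)
    (hx : IsTopologicallyNilpotent (x ^ 2 - x)) (hex : e * x = x) (hxe : x * e = x) :
    ∃ f, IsIdempotentElem f ∧ f - x ∈ J ∧ e * f = f ∧ f * e = f := by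
  set s := fun n ↦ aeval x (idempotentRefinement n)
  obtain ⟨f, hf⟩ := cauchySeq_tendsto_of_complete (cauchySeq_aeval_idempotentRefinement hx)
  have hsJ n : s n - x ∈ J := by
    obtain ⟨q, hq⟩ := sq_sub_dvd_idempotentRefinement_sub n
    have : s n - x = aeval x q * (x ^ 2 - x) := by
      simpa [mul_comm] using congrArg (aeval x) hq
    exact this ▸ J.mul_mem_left _ hxJ
  have hes n : e * s n = s n := by
    obtain ⟨q, hq⟩ := X_dvd_idempotentRefinement n
    simp only [s, hq, map_mul, aeval_X, ← mul_assoc, hex]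
  have hse n : s n * e = s n := by
    obtain ⟨q, hq⟩ := X_dvd_idempotentRefinement n
    simp only [s, hq, mul_comm X q, map_mul, aeval_X, mul_assoc, hxe]
  refine ⟨f, ?_, hJ.mem_of_tendsto (hf.sub_const x) (Eventually.of_forall hsJ),
    tendsto_nhds_unique ((tendsto_const_nhds.mul hf).congr hes) hf,
    tendsto_nhds_unique ((hf.mul tendsto_const_nhds).congr hse) hf⟩
  rw [IsIdempotentElem, ← pow_two, ← sub_eq_zero]
  exact tendsto_nhds_unique ((hf.pow 2).sub hf) (tendsto_aeval_idempotentRefinement_sq_sub hx)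

end Lifting

namespace IsPseudocompactAlgebra

variable {k : Type} [Field k] {A : Type} [Ring A] [Algebra k A]
  [UniformSpace A] [IsUniformAddGroup A] [IsTopologicalRing A]

theorem hasBasis_twoSidedIdeal (hA : IsPseudocompactAlgebra k A) :
    (𝓝 (0 : A)).HasBasis
      (fun I : TwoSidedIdeal A ↦
        IsOpen (I : Set A) ∧ FiniteDimensional k (A ⧸ I.asIdeal.restrictScalars k))
      (fun I ↦ (I : Set A)) := by
  refine ⟨fun s ↦ ⟨fun hs ↦ ?_, fun ⟨I, hI, hIs⟩ ↦
    mem_of_superset (hI.1.mem_nhds I.zero_mem) hIs⟩⟩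
  obtain ⟨I, hIright, hIopen, hIfd, hIs⟩ := hA.basis s hs
  have : I.IsTwoSided := ⟨fun b ha ↦ hIright _ ha b⟩
  exact ⟨I.toTwoSided, ⟨by rwa [Ideal.coe_toTwoSided], by rwa [Ideal.asIdeal_toTwoSided]⟩,
    by rwa [Ideal.coe_toTwoSided]⟩

theorem isLinearTopology (hA : IsPseudocompactAlgebra k A) :
    IsLinearTopology A A ∧ IsLinearTopology Aᵐᵒᵖ A :=
  isLinearTopology_iff_hasBasis_twoSidedIdeal.2 <| hA.hasBasis_twoSidedIdeal.to_hasBasis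
    (fun I hI ↦ ⟨I, hI.1.mem_nhds I.zero_mem, subset_rfl⟩)
    (fun _ hs ↦ hA.hasBasis_twoSidedIdeal.mem_iff.1 hs)

theorem nonarchimedeanAddGroup_s12 (hA : IsPseudocompactAlgebra k A) : NonarchimedeanAddGroup A where
  is_nonarchimedean U hU := by
    obtain ⟨I, hI, hIU⟩ := hA.hasBasis_twoSidedIdeal.mem_iff.1 hU
    exact ⟨⟨I.asIdeal.toAddSubgroup, hI.1⟩, hIU⟩

theorem isTopologicallyNilpotent_of_mem_openJacobson (hA : IsPseudocompactAlgebra k A) {x : A}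
    (hx : x ∈ openJacobson A) : IsTopologicallyNilpotent x := by
  refine hA.hasBasis_twoSidedIdeal.tendsto_right_iff.2 fun I ⟨hIopen, hIfd⟩ ↦ ?_
  have : Module.Finite k (A ⧸ I.asIdeal) :=
    Module.Finite.equiv (Submodule.Quotient.restrictScalarsEquiv k I.asIdeal)
  have : IsArtinianRing (A ⧸ I.asIdeal) := IsArtinianRing.of_finite k _
  have hjac : Ideal.Quotient.mk I.asIdeal x ∈ Ideal.jacobson ⊥ := by
    refine Ideal.mem_sInf.2 fun M ⟨_, hM⟩ ↦ ?_
    have hopen : IsOpen (M.comap (Ideal.Quotient.mk I.asIdeal) : Set A) :=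
      AddSubgroup.isOpen_mono (H₁ := I.asIdeal.toAddSubgroup)
        (H₂ := (M.comap (Ideal.Quotient.mk I.asIdeal)).toAddSubgroup)
        (fun y hy ↦ Ideal.mem_comap.2 <|
          (Ideal.Quotient.eq_zero_iff_mem.2 hy).symm ▸ M.zero_mem) hIopen
    exact Ideal.mem_sInf.1 hx
      ⟨hopen, Ideal.comap_isMaximal_of_surjective _ Ideal.Quotient.mk_surjective⟩
  obtain ⟨N, hN⟩ := IsArtinianRing.isNilpotent_jacobson_bot (R := A ⧸ I.asIdeal)
  have hxN : x ^ N ∈ I := by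
    have := Ideal.pow_mem_pow hjac N
    rwa [hN, Ideal.zero_eq_bot, Ideal.mem_bot, ← map_pow, Ideal.Quotient.eq_zero_iff_mem] at this
  filter_upwards [eventually_ge_atTop N] with n hn
  rw [← Nat.add_sub_cancel' hn, pow_add]
  exact I.mul_mem_right _ _ hxN

theorem isUnit_one_sub_of_mem_openJacobson (hA : IsPseudocompactAlgebra k A) {x : A}
    (hx : x ∈ openJacobson A) : IsUnit (1 - x) :=
  have := hA.t2; have := hA.complete; have := hA.nonarchimedeanAddGroup_s12
  (hA.isTopologicallyNilpotent_of_mem_openJacobson hx).isUnit_one_sub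

theorem eq_zero_of_isIdempotentElem_of_mem_openJacobson (hA : IsPseudocompactAlgebra k A)
    {e : A} (he : IsIdempotentElem e) (heJ : e ∈ openJacobson A) : e = 0 :=
  (hA.isUnit_one_sub_of_mem_openJacobson heJ).mul_right_eq_zero.1 <| by
    rw [sub_mul, one_mul, he.eq, sub_self]

theorem algHom_apply_eq_zero_of_mem_openJacobson (hA : IsPseudocompactAlgebra k A)
    (χ : A →ₐ[k] k) {x : A} (hx : x ∈ openJacobson A) : χ x = 0 := by
  by_contra h
  have hunit := (hA.isUnit_one_sub_of_mem_openJacobson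
    (Submodule.smul_of_tower_mem _ (χ x)⁻¹ hx)).map χ
  rw [map_sub, map_one, map_smul, smul_eq_mul, inv_mul_cancel₀ h, sub_self] at hunit
  exact not_isUnit_zero hunit

theorem exists_isIdempotentElem_sub_mem_openJacobson (hA : IsPseudocompactAlgebra k A)
    {x e : A} (hx : x ^ 2 - x ∈ openJacobson A) (hex : e * x = x) (hxe : x * e = x) :
    ∃ f, IsIdempotentElem f ∧ f - x ∈ openJacobson A ∧ e * f = f ∧ f * e = f := by
  have := hA.t2; have := hA.complete; have := hA.nonarchimedeanAddGroup_s12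
  have := hA.isLinearTopology.1; have := hA.isLinearTopology.2
  exact exists_isIdempotentElem_sub_mem isClosed_openJacobson hx
    (hA.isTopologicallyNilpotent_of_mem_openJacobson hx) hex hxe

section Pointed

variable {ι : Type*} {φ : A →ₐ[k] (ι → k)}

theorem exists_isIdempotentElem_lift (hA : IsPseudocompactAlgebra k A) (hφ : Surjective φ)
    (hker : RingHom.ker φ = openJacobson A) {e : A} (he : IsIdempotentElem e)
    {u : ι → k} (hu : IsIdempotentElem u) (hue : u * φ e = u) :
    ∃ f, IsIdempotentElem f ∧ e * f = f ∧ f * e = f ∧ φ f = u := by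
  obtain ⟨z, rfl⟩ := hφ u
  have hx : φ (e * z * e) = φ z := by
    rw [map_mul, map_mul, mul_comm (φ e), hue, hue]
  obtain ⟨f, hf, hfx, hef, hfe⟩ := hA.exists_isIdempotentElem_sub_mem_openJacobson
    (x := e * z * e) (e := e)
    (hker ▸ RingHom.mem_ker.2 (by rw [map_sub, map_pow, hx, pow_two, hu.eq, sub_self]))
    (by rw [← mul_assoc, ← mul_assoc, he.eq]) (by rw [mul_assoc, he.eq])
  refine ⟨f, hf, hef, hfe, ?_⟩
  rw [← hx, ← sub_eq_zero, ← map_sub]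
  exact RingHom.mem_ker.1 (hker ▸ hfx)

theorem isPrimitiveIdempotent_iff [DecidableEq ι] (hA : IsPseudocompactAlgebra k A)
    (hφ : Surjective φ) (hker : RingHom.ker φ = openJacobson A) {e : A} :
    IsPrimitiveIdempotent e ↔ IsIdempotentElem e ∧ (support (φ e)).Subsingleton := by
  refine ⟨fun ⟨he, hprim⟩ ↦ ⟨he, fun i hi j hj ↦ ?_⟩, fun ⟨he, hsupp⟩ ↦ ⟨he, ?_⟩⟩
  · by_contra hij
    have hei : φ e i = 1 := ((he.map φ).apply_eq_zero_or_one i).resolve_left hi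
    obtain ⟨f, hf, hef, hfe, hφf⟩ := hA.exists_isIdempotentElem_lift hφ hker he
      (u := Pi.single i 1) (by rw [IsIdempotentElem, ← Pi.single_mul, one_mul])
      (by rw [← Pi.single_mul_left, one_mul, hei])
    refine hprim ⟨f, e - f, hf, hf.sub he hfe hef, ?_, ?_, ?_, ?_, by abel⟩
    · rintro rfl
      simpa using congrFun hφf i
    · intro h
      have := congrFun (congrArg φ h) j
      rw [map_sub, map_zero, Pi.sub_apply, hφf, Pi.single_eq_of_ne (Ne.symm hij), sub_zero]
        at this
      exact hj this
    · rw [mul_sub, hfe, hf.eq, sub_self]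
    · rw [sub_mul, hef, hf.eq, sub_self]
  · rintro ⟨f, g, hf, hg, hf0, hg0, hfg, hgf, rfl⟩
    have hsep : ∀ {f g : A}, IsIdempotentElem f → f ≠ 0 → f * g = 0 →
        ∃ i, φ f i = 1 ∧ φ g i = 0 := by
      intro f g hf hf0 hfg
      obtain ⟨i, hi⟩ : ∃ i, φ f i ≠ 0 := by
        by_contra! h
        exact hf0 (hA.eq_zero_of_isIdempotentElem_of_mem_openJacobson hf
          (hker ▸ RingHom.mem_ker.2 (funext h)))
      have hfi := ((hf.map φ).apply_eq_zero_or_one i).resolve_left hi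
      refine ⟨i, hfi, ?_⟩
      simpa [hfi] using congrFun (congrArg φ hfg) i
    obtain ⟨i, hfi, hgi⟩ := hsep hf hf0 hfg
    obtain ⟨j, hgj, hfj⟩ := hsep hg hg0 hgf
    have hij : i = j := hsupp (by simp [hfi, hgi]) (by simp [hfj, hgj])
    simp [hij, hfj] at hfi

theorem exists_algHom_eq_apply [Fintype ι] [DecidableEq ι] (hA : IsPseudocompactAlgebra k A)
    (hφ : Surjective φ) (hker : RingHom.ker φ = openJacobson A) (χ : A →ₐ[k] k) :
    ∃ i, ∀ x, χ x = φ x i := by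
  have hχ : ∀ x y, φ x = φ y → χ x = χ y := fun x y h ↦ sub_eq_zero.1 <| by
    rw [← map_sub]
    exact hA.algHom_apply_eq_zero_of_mem_openJacobson χ
      (hker ▸ RingHom.mem_ker.2 (by rw [map_sub, h, sub_self]))
  choose a ha using fun i ↦ hφ (Pi.single i 1)
  have hsum : ∑ i, χ (a i) = 1 := by
    rw [← map_sum, hχ _ 1 (by simp [ha, Finset.univ_sum_single, Pi.one_def]), map_one]
  obtain ⟨i, -, hi⟩ := Finset.exists_ne_zero_of_sum_ne_zero (hsum ▸ one_ne_zero)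
  refine ⟨i, fun x ↦ mul_right_cancel₀ hi ?_⟩
  calc χ x * χ (a i) = χ (x * a i) := (map_mul ..).symm
    _ = χ (φ x i • a i) := hχ _ _ <| by
      rw [map_mul, map_smul, ha, ← Pi.single_mul_right, mul_one, ← Pi.single_smul', smul_eq_mul,
        mul_one]
    _ = φ x i * χ (a i) := by rw [map_smul, smul_eq_mul]

theorem exists_comp_eq [Fintype ι] [DecidableEq ι] (hA : IsPseudocompactAlgebra k A)
    (hφ : Surjective φ) (hker : RingHom.ker φ = openJacobson A) {κ : Type*}
    (ψ : A →ₐ[k] (κ → k)) : ∃ σ : κ → ι, ∀ x, ψ x = φ x ∘ σ := by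
  choose σ hσ using fun j ↦
    hA.exists_algHom_eq_apply hφ hker ((Pi.evalAlgHom k (fun _ ↦ k) j).comp ψ)
  exact ⟨σ, fun x ↦ funext fun j ↦ hσ j x⟩

end Pointed

end IsPseudocompactAlgebra

section Morphisms

variable {k : Type} [Field k] {A B : Type} [Ring A] [Algebra k A] [Ring B] [Algebra k B]
  {ι κ : Type*} {φA : A →ₐ[k] (ι → k)} {φB : B →ₐ[k] (κ → k)} {α : A →ₐ[k] B} {σ : κ → ι}

theorem forall_exists_map_sub_mem_Jrad_iff_injective [TopologicalSpace B]
    (hφA : Surjective φA) (hφB : Surjective φB) (hkerB : RingHom.ker φB = openJacobson B)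
    (hσ : ∀ x, φB (α x) = φA x ∘ σ) :
    (∀ b : B, ∃ a : A, α a - b ∈ Jrad k B) ↔ Injective σ := by
  have hmem a b : α a - b ∈ Jrad k B ↔ φA a ∘ σ = φB b := by
    rw [← hσ, ← sub_eq_zero, ← map_sub, ← RingHom.mem_ker, hkerB]
    rfl
  rw [← surjective_comp_right_iff_injective (γ := k)]
  refine ⟨fun h w ↦ ?_, fun h b ↦ ?_⟩
  · obtain ⟨b, rfl⟩ := hφB w
    obtain ⟨a, ha⟩ := h b
    exact ⟨φA a, (hmem a b).1 ha⟩
  · obtain ⟨v, hv⟩ := h (φB b)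
    obtain ⟨a, rfl⟩ := hφA v
    exact ⟨a, (hmem a b).2 hv⟩

theorem forall_isPrimitiveIdempotent_map_iff_injective [DecidableEq ι] [DecidableEq κ]
    [UniformSpace A] [IsUniformAddGroup A] [IsTopologicalRing A]
    [UniformSpace B] [IsUniformAddGroup B] [IsTopologicalRing B]
    (hA : IsPseudocompactAlgebra k A) (hB : IsPseudocompactAlgebra k B)
    (hφA : Surjective φA) (hkerA : RingHom.ker φA = openJacobson A)
    (hφB : Surjective φB) (hkerB : RingHom.ker φB = openJacobson B)
    (hσ : ∀ x, φB (α x) = φA x ∘ σ) :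
    (∀ e : A, IsPrimitiveIdempotent e → IsPrimitiveIdempotent (α e)) ↔ Injective σ := by
  simp_rw [hA.isPrimitiveIdempotent_iff hφA hkerA, hB.isPrimitiveIdempotent_iff hφB hkerB, hσ,
    support_comp_eq_preimage]
  refine ⟨fun h j j' hjj' ↦ ?_, fun hσinj e ⟨he, hsupp⟩ ↦ ⟨he.map α, hsupp.preimage hσinj⟩⟩
  obtain ⟨e, he, -, -, hφe⟩ := hA.exists_isIdempotentElem_lift hφA hkerA .one
    (u := Pi.single (σ j) 1) (by simp [IsIdempotentElem, ← Pi.single_mul]) (by simp)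
  refine (h e ⟨he, hφe ▸ Pi.subsingleton_support_single⟩).2 ?_ ?_ <;> simp [hφe, hjj']

end Morphisms

theorem respects_primitive_idempotents_iff_general
    (k : Type) [Field k]
    (A : Type) [Ring A] [Algebra k A] [UniformSpace A] [IsUniformAddGroup A] [IsTopologicalRing A]
    (B : Type) [Ring B] [Algebra k B] [UniformSpace B] [IsUniformAddGroup B] [IsTopologicalRing B]
    (hA : IsPseudocompactAlgebra k A) (hB : IsPseudocompactAlgebra k B)
    (hAp : IsPointed k A) (hBp : IsPointed k B)
    (α : A →ₐ[k] B) :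
    (∀ e : A, IsPrimitiveIdempotent e → IsPrimitiveIdempotent (α e)) ↔
      (∀ b : B, ∃ a : A, α a - b ∈ Jrad k B) := by
  obtain ⟨n, φA, hφA, hkerA⟩ := hAp
  obtain ⟨m, φB, hφB, hkerB⟩ := hBp
  obtain ⟨σ, hσ⟩ := hA.exists_comp_eq hφA hkerA (φB.comp α)
  exact (forall_isPrimitiveIdempotent_map_iff_injective hA hB hφA hkerA hφB hkerB hσ).trans
    (forall_exists_map_sub_mem_Jrad_iff_injective hφA hφB hkerB hσ).symm

/-- Let `A`, `B` be pointed pseudocompact `k`-algebras with finite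
dimensional radical quotients and `α : A → B` a continuous unital algebra homomorphism.
Then `α` respects primitive idempotents if and only if the induced homomorphism
`A/J(A) → B/J(B)` is surjective (the latter being expressed as: every `b ∈ B` is congruent
to some `α(a)` modulo `J(B)`). -/
theorem respects_primitive_idempotents_iff
    (k : Type) [Field k] [PerfectField k]
    (A : Type) [Ring A] [Algebra k A] [UniformSpace A] [IsUniformAddGroup A] [IsTopologicalRing A]
    (B : Type) [Ring B] [Algebra k B] [UniformSpace B] [IsUniformAddGroup B] [IsTopologicalRing B]
    (hA : IsPseudocompactAlgebra k A) (hB : IsPseudocompactAlgebra k B)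
    (hAp : IsPointed k A) (hBp : IsPointed k B)
    (hAfd : FiniteDimensional k (A ⧸ Jrad k A))
    (hBfd : FiniteDimensional k (B ⧸ Jrad k B))
    (α : A →ₐ[k] B) (hcont : Continuous α) :
    (∀ e : A, IsPrimitiveIdempotent e → IsPrimitiveIdempotent (α e)) ↔
      (∀ b : B, ∃ a : A, α a - b ∈ Jrad k B) :=
  respects_primitive_idempotents_iff_general k A B hA hB hAp hBp α
end
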